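/- arXiv:1604.07522 — 8 statements merged into one kernel-verified Lean document; each statement's English description precedes it below -/
import Mathlib

section
/- If a function f : X → Y between topological spaces is weakly discontinuous, then f is resolvable, i.e., for every resolvable subset R ⊆ Y the preimage f⁻¹(R) is a resolvable subset of X. -/
open Set Filter Topology

/-- A subset `A` of a topological space `X` is *resolvable* if for every closed set `F ⊆ X`
the set `closure (F ∩ A) ∩ closure (F \ A)` is nowhere dense in the subspace `F`. -/
def IsResolvableSet {X : Type*} [TopologicalSpace X] (A : Set X) : Prop :=
  ∀ F : Set X, IsClosed F →
    IsNowhereDense (Subtype.val ⁻¹' (closure (F ∩ A) ∩ closure (F \ A)) : Set F)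

/-- A function `f : X → Y` is *weakly discontinuous* if every subspace `A ⊆ X` contains a
subset `U ⊆ A` which is open and dense in `A` and such that `f` restricted to `U` is
continuous. -/
def WeaklyDiscontinuous {X Y : Type*} [TopologicalSpace X] [TopologicalSpace Y]
    (f : X → Y) : Prop :=
  ∀ A : Set X, ∃ U : Set X, U ⊆ A ∧ (∃ V : Set X, IsOpen V ∧ U = V ∩ A) ∧
    A ⊆ closure U ∧ ContinuousOn f U

/-- A function is *resolvable* if preimages of resolvable sets are resolvable. -/
def ResolvableFunction {X Y : Type*} [TopologicalSpace X] [TopologicalSpace Y]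
    (f : X → Y) : Prop :=
  ∀ R : Set Y, IsResolvableSet R → IsResolvableSet (f ⁻¹' R)

/-- A function is *open-resolvable* if preimages of open sets are resolvable. -/
def OpenResolvableFunction {X Y : Type*} [TopologicalSpace X] [TopologicalSpace Y]
    (f : X → Y) : Prop :=
  ∀ U : Set Y, IsOpen U → IsResolvableSet (f ⁻¹' U)

/-- A base of the topology is *countably additive* if it is closed under countable unions. -/
def CountablyAdditiveBase {Y : Type*} [TopologicalSpace Y] (B : Set (Set Y)) : Prop :=
  TopologicalSpace.IsTopologicalBasis B ∧ ∀ C ⊆ B, C.Countable → ⋃₀ C ∈ B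

/-- A function is *base-resolvable* if there is a countably additive base of the topology of the
codomain whose members have resolvable preimages. -/
def BaseResolvableFunction {X Y : Type*} [TopologicalSpace X] [TopologicalSpace Y]
    (f : X → Y) : Prop :=
  ∃ B : Set (Set Y), CountablyAdditiveBase B ∧ ∀ U ∈ B, IsResolvableSet (f ⁻¹' U)

/-- A space `X` is *Preiss-Simon at `x`* if for every `A ⊆ X` with `x ∈ closure A` there is
a sequence `(U n)` of nonempty, relatively open subsets of `A` converging to `x`, i.e. every
neighborhood of `x` contains all but finitely many of the sets `U n`. -/
def PreissSimonAt {X : Type*} [TopologicalSpace X] (x : X) : Prop :=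
  ∀ A : Set X, x ∈ closure A →
    ∃ U : ℕ → Set X, (∀ n, U n ⊆ A) ∧ (∀ n, (U n).Nonempty) ∧
      (∀ n, IsOpen (Subtype.val ⁻¹' (U n) : Set A)) ∧
      ∀ V ∈ 𝓝 x, ∀ᶠ n in atTop, U n ⊆ V

/-- A *Preiss-Simon space* is a space which is Preiss-Simon at each of its points. -/
def PreissSimonSpace (X : Type*) [TopologicalSpace X] : Prop :=
  ∀ x : X, PreissSimonAt x

/-- A function is *scatteredly continuous* if its restriction to any nonempty subset has a
point of continuity. -/
def ScatteredlyContinuous {X Y : Type*} [TopologicalSpace X] [TopologicalSpace Y]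
    (f : X → Y) : Prop :=
  ∀ A : Set X, A.Nonempty → ∃ a ∈ A, ContinuousWithinAt f A a

/-- `f` is *almost continuous at `x`* if for every neighborhood `Oy` of `f x` the preimage
`f ⁻¹' Oy` is dense in some neighborhood of `x`. -/
def AlmostContinuousAt {X Y : Type*} [TopologicalSpace X] [TopologicalSpace Y]
    (f : X → Y) (x : X) : Prop :=
  ∀ Oy ∈ 𝓝 (f x), ∃ N : Set X, IsOpen N ∧ x ∈ N ∧ N ⊆ closure (f ⁻¹' Oy)

/-- `f` is *weakly continuous at `x`* if for every neighborhood `Oy` of `f x` the interior of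
the preimage `f ⁻¹' Oy` is dense in some neighborhood of `x`. -/
def WeaklyContinuousAt {X Y : Type*} [TopologicalSpace X] [TopologicalSpace Y]
    (f : X → Y) (x : X) : Prop :=
  ∀ Oy ∈ 𝓝 (f x), ∃ N : Set X, IsOpen N ∧ x ∈ N ∧ N ⊆ closure (interior (f ⁻¹' Oy))

/-- `X` has a countable π-base: a countable family of nonempty open sets such that every
nonempty open set contains a member of the family. -/
def HasCountablePiBase (X : Type*) [TopologicalSpace X] : Prop :=
  ∃ P : Set (Set X), P.Countable ∧ (∀ U ∈ P, IsOpen U ∧ U.Nonempty) ∧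
    ∀ U : Set X, IsOpen U → U.Nonempty → ∃ V ∈ P, V ⊆ U

/-! A set `A` is resolvable iff the only set `S` in which both `S ∩ A` and `S \ A` are dense is
`∅`: such an `S` makes `closure S` a closed set violating resolvability, and conversely a piece
`W ∩ F` (with `W` open) of the overlap of the two closures is such a set. The property passes to
relatively open subsets, in particular to a dense subset of `S` on which `f` is continuous, and
continuity carries it from `f ⁻¹' R` to `R` on the image, which must then be empty. -/

section DenseCodense

variable {X Y : Type*} [TopologicalSpace X] [TopologicalSpace Y]

def IsDenseCodenseIn (A S : Set X) : Prop :=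
  S ⊆ closure (S ∩ A) ∩ closure (S \ A)

theorem IsDenseCodenseIn.closure {A S : Set X} (h : IsDenseCodenseIn A S) :
    IsDenseCodenseIn A (closure S) :=
  closure_minimal (h.trans (inter_subset_inter
      (closure_mono (inter_subset_inter_left _ subset_closure))
      (closure_mono (sdiff_subset_sdiff_left subset_closure))))
    (isClosed_closure.inter isClosed_closure)

theorem isDenseCodenseIn_inter_of_isOpen {A S O : Set X} (hO : IsOpen O)
    (h : O ∩ S ⊆ closure (S ∩ A) ∩ closure (S \ A)) : IsDenseCodenseIn A (O ∩ S) := by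
  intro x hx
  rw [inter_assoc, inter_sdiff_assoc]
  exact ⟨hO.inter_closure ⟨hx.1, (h hx).1⟩, hO.inter_closure ⟨hx.1, (h hx).2⟩⟩

theorem IsDenseCodenseIn.image {f : X → Y} {R : Set Y} {U : Set X}
    (h : IsDenseCodenseIn (f ⁻¹' R) U) (hf : ContinuousOn f U) :
    IsDenseCodenseIn R (f '' U) := by
  rintro _ ⟨u, hu, rfl⟩
  rw [← image_inter_preimage, ← image_sdiff_preimage]
  exact ⟨((hf u hu).mono inter_subset_left).mem_closure_image (h hu).1,
    ((hf u hu).mono sdiff_subset).mem_closure_image (h hu).2⟩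

theorem isResolvableSet_iff {A : Set X} :
    IsResolvableSet A ↔ ∀ S : Set X, IsDenseCodenseIn A S → S = ∅ := by
  constructor
  · intro hA S hS
    have hnd := hA (closure S) isClosed_closure
    rw [preimage_eq_univ_iff.mpr (by rw [Subtype.range_coe]; exact hS.closure)] at hnd
    simpa [IsNowhereDense] using hnd
  · intro h F _
    set T := closure (F ∩ A) ∩ closure (F \ A)
    rw [((isClosed_closure.inter isClosed_closure).preimage
      continuous_subtype_val).isNowhereDense_iff]
    obtain ⟨W, hW, hWF⟩ :=
      isOpen_induced_iff.mp (isOpen_interior (s := (Subtype.val ⁻¹' T : Set F)))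
    have hWF_sub : W ∩ F ⊆ T := fun x hx => by
      have hx' : (⟨x, hx.2⟩ : F) ∈ interior (Subtype.val ⁻¹' T) := hWF ▸ hx.1
      exact interior_subset (s := (Subtype.val ⁻¹' T : Set F)) hx'
    have hWF_empty := h _ (isDenseCodenseIn_inter_of_isOpen hW hWF_sub)
    rw [← hWF, eq_empty_iff_forall_notMem]
    exact fun x hxW => hWF_empty.subset ⟨hxW, x.2⟩

end DenseCodense

/-- If a function between topological spaces is weakly discontinuous, then it is resolvable. -/
theorem weaklyDiscontinuous_resolvable {X Y : Type*} [TopologicalSpace X] [TopologicalSpace Y]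
    (f : X → Y) (hf : WeaklyDiscontinuous f) : ResolvableFunction f := by
  intro R hR
  rw [isResolvableSet_iff] at hR ⊢
  intro S hS
  obtain ⟨U, -, ⟨V, hV, rfl⟩, hSU, hfU⟩ := hf S
  have hU : IsDenseCodenseIn (f ⁻¹' R) (V ∩ S) :=
    isDenseCodenseIn_inter_of_isOpen hV (inter_subset_right.trans hS)
  have hfU_empty : f '' (V ∩ S) = ∅ := hR _ (hU.image hfU)
  rw [image_eq_empty] at hfU_empty
  simpa [hfU_empty] using hSU
end

section
/- A subset A of a topological space X is resolvable if and only if its characteristic function χ_A : X → {0,1} (into the two-point discrete space, sending points of A to 1 and all other points to 0) is weakly discontinuous. -/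
open Set Filter Topology

/-!
The characteristic function of `A` is continuous within `U` at `x ∈ U` exactly when `x` avoids
`closure (U ∩ A) ∩ closure (U \ A)`. So for a subspace `S` with `F = closure S` the natural
witness of weak discontinuity is `S` minus the closed set `closure (F ∩ A) ∩ closure (F \ A)`,
and resolvability of `A` says precisely that these witnesses stay dense.
-/

section

variable {X : Type*} [TopologicalSpace X]

theorem isNowhereDense_preimage_val_iff {D F : Set X} (hD : IsClosed D) :
    IsNowhereDense (Subtype.val ⁻¹' D : Set F) ↔ F ⊆ closure (F \ D) := by
  rw [(hD.preimage continuous_subtype_val).isNowhereDense_iff, interior_eq_empty_iff_dense_compl,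
    Subtype.dense_iff, ← preimage_compl, Subtype.image_preimage_coe, sdiff_eq]

theorem isResolvableSet_iff_subset_closure_diff {A : Set X} :
    IsResolvableSet A ↔
      ∀ F, IsClosed F → F ⊆ closure (F \ (closure (F ∩ A) ∩ closure (F \ A))) :=
  forall₂_congr fun _ _ ↦ isNowhereDense_preimage_val_iff (isClosed_closure.inter isClosed_closure)

theorem eventually_nhdsWithin_mem_iff_notMem_closure_diff {A U : Set X} {x : X} :
    (∀ᶠ y in 𝓝[U] x, y ∈ A) ↔ x ∉ closure (U \ A) := by
  simp only [mem_closure_iff_frequently, not_frequently, eventually_nhdsWithin_iff, Set.mem_sdiff,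
    not_and, not_not]

theorem continuousWithinAt_ite_mem_iff {A U : Set X} [DecidablePred (· ∈ A)] {x : X}
    (hx : x ∈ U) :
    ContinuousWithinAt (fun y ↦ if y ∈ A then true else false) U x ↔
      x ∉ closure (U ∩ A) ∩ closure (U \ A) := by
  rw [ContinuousWithinAt, nhds_discrete, tendsto_pure]
  by_cases hxA : x ∈ A
  · have hx' : x ∈ closure (U ∩ A) := subset_closure ⟨hx, hxA⟩
    simpa [hxA, hx'] using eventually_nhdsWithin_mem_iff_notMem_closure_diff (A := A)
  · have hx' : x ∈ closure (U \ A) := subset_closure ⟨hx, hxA⟩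
    simpa [hxA, hx'] using eventually_nhdsWithin_mem_iff_notMem_closure_diff (A := Aᶜ)

theorem weaklyDiscontinuous_ite_mem_of_isResolvableSet {A : Set X} [DecidablePred (· ∈ A)]
    (hA : IsResolvableSet A) : WeaklyDiscontinuous fun x ↦ if x ∈ A then true else false := by
  intro S
  set F := closure S
  set D := closure (F ∩ A) ∩ closure (F \ A)
  have hD : IsOpen Dᶜ := (isClosed_closure.inter isClosed_closure).isOpen_compl
  have hUF : Dᶜ ∩ S ⊆ F := inter_subset_right.trans subset_closure
  refine ⟨Dᶜ ∩ S, inter_subset_right, ⟨Dᶜ, hD, rfl⟩, ?_, fun x hx ↦ ?_⟩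
  · calc S ⊆ F := subset_closure
      _ ⊆ closure (F \ D) := isResolvableSet_iff_subset_closure_diff.1 hA F isClosed_closure
      _ ⊆ closure (Dᶜ ∩ S) :=
        closure_minimal (sdiff_eq_compl_inter (s := F) ▸ hD.inter_closure) isClosed_closure
  · rw [continuousWithinAt_ite_mem_iff hx]
    exact fun h ↦ hx.1 ⟨closure_mono (inter_subset_inter_left _ hUF) h.1,
      closure_mono (sdiff_subset_sdiff_left hUF) h.2⟩

theorem isResolvableSet_of_weaklyDiscontinuous_ite_mem {A : Set X} [DecidablePred (· ∈ A)]
    (h : WeaklyDiscontinuous fun x ↦ if x ∈ A then true else false) : IsResolvableSet A := by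
  refine isResolvableSet_iff_subset_closure_diff.2 fun F _ ↦ ?_
  obtain ⟨_, -, ⟨V, hV, rfl⟩, hFU, hcont⟩ := h F
  refine hFU.trans (closure_mono fun x hx ↦ ⟨hx.2, fun hxD ↦ ?_⟩)
  refine (continuousWithinAt_ite_mem_iff hx).1 (hcont x hx) ⟨?_, ?_⟩
  · simpa only [inter_assoc] using hV.inter_closure ⟨hx.1, hxD.1⟩
  · simpa only [inter_sdiff_assoc] using hV.inter_closure ⟨hx.1, hxD.2⟩

end

open Classical in
/-- A subset `A` of a topological space is resolvable if and only if its characteristic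
function into the two-point discrete space `Bool` is weakly discontinuous. -/
theorem isResolvableSet_iff_weaklyDiscontinuous_indicator {X : Type*} [TopologicalSpace X]
    (A : Set X) :
    IsResolvableSet A ↔
      WeaklyDiscontinuous (fun x => if x ∈ A then true else false) :=
  ⟨weaklyDiscontinuous_ite_mem_of_isResolvableSet, isResolvableSet_of_weaklyDiscontinuous_ite_mem⟩
end

section
/- If f : X → Y and g : Y → Z are weakly discontinuous functions between topological spaces, then the composition g ∘ f : X → Z is weakly discontinuous. -/
open Set Filter Topology

/- Take the union `W` of all open `V` with `f` continuous on `V ∩ A`. Continuity is local, so `f`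
is continuous on `W ∩ A`; and if `A ⊄ closure (W ∩ A)`, the hypothesis applied to
`A \ closure (W ∩ A)` yields an open set that should have been part of `W`. -/
theorem weaklyDiscontinuous_of_forall_nonempty {X Y : Type*} [TopologicalSpace X]
    [TopologicalSpace Y] {f : X → Y}
    (h : ∀ A : Set X, A.Nonempty → ∃ V : Set X, IsOpen V ∧ (V ∩ A).Nonempty ∧
      ContinuousOn f (V ∩ A)) : WeaklyDiscontinuous f := by
  intro A
  set W := ⋃₀ {V : Set X | IsOpen V ∧ ContinuousOn f (V ∩ A)}
  refine ⟨W ∩ A, inter_subset_right, ⟨W, isOpen_sUnion fun V hV => hV.1, rfl⟩, ?_, ?_⟩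
  · by_contra hA
    obtain ⟨V, hV, ⟨y, hyV, hyA, hyC⟩, hfV⟩ := h (A \ closure (W ∩ A)) (sdiff_nonempty.2 hA)
    have hVW : V \ closure (W ∩ A) ⊆ W := by
      refine subset_sUnion_of_mem ⟨hV.sdiff isClosed_closure, ?_⟩
      rwa [← inter_sdiff_right_comm, inter_sdiff_assoc]
    exact hyC (subset_closure ⟨hVW ⟨hyV, hyC⟩, hyA⟩)
  · refine continuousOn_of_locally_continuousOn fun x ⟨hxW, _⟩ => ?_
    obtain ⟨V, ⟨hV, hfV⟩, hxV⟩ := hxW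
    exact ⟨V, hV, hxV, hfV.mono fun y hy => ⟨hy.2, hy.1.2⟩⟩

theorem WeaklyDiscontinuous.exists_isOpen_continuousOn {X Y : Type*} [TopologicalSpace X]
    [TopologicalSpace Y] {f : X → Y} (hf : WeaklyDiscontinuous f) {A : Set X}
    (hA : A.Nonempty) : ∃ V : Set X, IsOpen V ∧ (V ∩ A).Nonempty ∧ ContinuousOn f (V ∩ A) := by
  obtain ⟨U, -, ⟨V, hV, rfl⟩, hAU, hfU⟩ := hf A
  exact ⟨V, hV, closure_nonempty_iff.1 (hA.mono hAU), hfU⟩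

/- `f` is continuous on a nonempty relatively open `U ⊆ A`, and `g` on a nonempty relatively open
`U' ⊆ f '' U`; then `g ∘ f` is continuous on `U ∩ f ⁻¹' U'`, which is relatively open in `A`. -/
/-- The composition of weakly discontinuous functions is weakly discontinuous. -/
theorem weaklyDiscontinuous_comp {X Y Z : Type*} [TopologicalSpace X] [TopologicalSpace Y]
    [TopologicalSpace Z] (f : X → Y) (g : Y → Z)
    (hf : WeaklyDiscontinuous f) (hg : WeaklyDiscontinuous g) :
    WeaklyDiscontinuous (g ∘ f) := by
  refine weaklyDiscontinuous_of_forall_nonempty fun A hA => ?_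
  obtain ⟨V, hV, hVA, hfV⟩ := hf.exists_isOpen_continuousOn hA
  obtain ⟨V', hV', ⟨_, hxV', x, hx, rfl⟩, hgV'⟩ :=
    hg.exists_isOpen_continuousOn (hVA.image f)
  obtain ⟨u, hu, hpre⟩ := continuousOn_iff'.1 hfV V' hV'
  have hUA : u ∩ V ∩ A = f ⁻¹' V' ∩ (V ∩ A) := by rw [hpre, inter_assoc]
  refine ⟨u ∩ V, hu.inter hV, ?_, ?_⟩
  · rw [hUA]
    exact ⟨x, hxV', hx⟩
  · rw [hUA]
    exact hgV'.comp (hfV.mono inter_subset_right) fun y hy => ⟨hy.1, y, hy.2, rfl⟩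
end

section
/- A function f : X → Y from a topological space X to a regular (T3) space Y is weakly discontinuous if and only if f is scatteredly continuous. -/
open Set Filter Topology

/-!
For scattered continuity ⇒ weak discontinuity, take as `U` the complement in `A` of the closure of
the set `D` of discontinuity points of `f|A`. If it failed to be dense, some open
`V` would meet `A` only inside `closure D`; scattered continuity gives a point `d ∈ V ∩ D` at which
`f|(V ∩ D)` is continuous, and regularity of `Y` lets this continuity spread to `f|A` across the
dense set `V ∩ D`, because `f|A` is continuous at every point of `A \ D`.
-/

section

variable {X Y : Type*} [TopologicalSpace X] [TopologicalSpace Y]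

/-- Testing against closed neighbourhoods of `f d`: a point `x ∈ A \ S` near `d` is a limit of
points of `S` near `d`, and `f|A` is continuous at `x`. -/
theorem ContinuousWithinAt.of_dense_of_continuousWithinAt_diff [RegularSpace Y] {f : X → Y}
    {A S : Set X} {d : X} (hSA : S ⊆ A) (hdense : A ⊆ closure S)
    (hcont : ∀ x ∈ A \ S, ContinuousWithinAt f A x) (hd : ContinuousWithinAt f S d) :
    ContinuousWithinAt f A d := by
  rw [ContinuousWithinAt, (closed_nhds_basis (f d)).tendsto_right_iff]
  rintro T ⟨hT, hTclosed⟩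
  obtain ⟨O, hO, hdO, hOS⟩ := mem_nhdsWithin.1 (hd hT)
  refine mem_nhdsWithin.2 ⟨O, hO, hdO, fun x ⟨hxO, hxA⟩ => ?_⟩
  by_cases hxS : x ∈ S
  · exact hOS ⟨hxO, hxS⟩
  · have hx : x ∈ closure (O ∩ S) := hO.inter_closure ⟨hxO, hdense hxA⟩
    have hxcont : ContinuousWithinAt f (O ∩ S) x :=
      (hcont x ⟨hxA, hxS⟩).mono (inter_subset_right.trans hSA)
    exact hTclosed.closure_subset (hxcont.mem_closure hx hOS)

theorem WeaklyDiscontinuous.scatteredlyContinuous {f : X → Y} (hf : WeaklyDiscontinuous f) :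
    ScatteredlyContinuous f := by
  rintro A ⟨a, ha⟩
  obtain ⟨U, hUA, ⟨V, hV, rfl⟩, hAU, hfU⟩ := hf A
  obtain ⟨u, hu⟩ : (V ∩ A).Nonempty := closure_nonempty_iff.1 ⟨a, hAU ha⟩
  refine ⟨u, hu.2, (hfU u hu).mono_of_mem_nhdsWithin ?_⟩
  rw [inter_comm]
  exact inter_mem_nhdsWithin A (hV.mem_nhds hu.1)

theorem ScatteredlyContinuous.subset_closure_diff_closure_discontinuities [RegularSpace Y]
    {f : X → Y} (hf : ScatteredlyContinuous f) (A : Set X) :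
    A ⊆ closure (A \ closure {a ∈ A | ¬ ContinuousWithinAt f A a}) := by
  set D := {a ∈ A | ¬ ContinuousWithinAt f A a}
  intro a ha
  rw [mem_closure_iff]
  intro V hV haV
  by_contra hempty
  have hVA : V ∩ A ⊆ closure D := fun x hx => by_contra fun hxD => hempty ⟨x, hx.1, hx.2, hxD⟩
  have hdense : V ∩ A ⊆ closure (V ∩ D) := fun x hx => hV.inter_closure ⟨hx.1, hVA hx⟩
  obtain ⟨d, ⟨hdV, hdA, hdisc⟩, hd⟩ :=
    hf (V ∩ D) (closure_nonempty_iff.1 ⟨a, hdense ⟨haV, ha⟩⟩)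
  have hcont : ∀ x ∈ (V ∩ A) \ (V ∩ D), ContinuousWithinAt f (V ∩ A) x :=
    fun x ⟨⟨hxV, hxA⟩, hxD⟩ => (not_not.1 fun h => hxD ⟨hxV, hxA, h⟩).mono inter_subset_right
  have hdVA := hd.of_dense_of_continuousWithinAt_diff (inter_subset_inter_right V (sep_subset _ _))
    hdense hcont
  rw [inter_comm, continuousWithinAt_inter (hV.mem_nhds hdV)] at hdVA
  exact hdisc hdVA

theorem ScatteredlyContinuous.weaklyDiscontinuous [RegularSpace Y] {f : X → Y}
    (hf : ScatteredlyContinuous f) : WeaklyDiscontinuous f := by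
  intro A
  set D := {a ∈ A | ¬ ContinuousWithinAt f A a}
  refine ⟨A \ closure D, sdiff_subset, ⟨(closure D)ᶜ, isClosed_closure.isOpen_compl,
    sdiff_eq_compl_inter⟩, hf.subset_closure_diff_closure_discontinuities A, fun a ha => ?_⟩
  exact (not_not.1 fun h => ha.2 (subset_closure ⟨ha.1, h⟩)).mono sdiff_subset

end

/-- A function from a topological space to a regular (T3) space is weakly discontinuous if
and only if it is scatteredly continuous. -/
theorem weaklyDiscontinuous_iff_scatteredlyContinuous {X Y : Type*} [TopologicalSpace X]
    [TopologicalSpace Y] [T3Space Y] (f : X → Y) :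
    WeaklyDiscontinuous f ↔ ScatteredlyContinuous f :=
  ⟨WeaklyDiscontinuous.scatteredlyContinuous, ScatteredlyContinuous.weaklyDiscontinuous⟩
end

section
/- If A and B are disjoint resolvable subsets of a topological space X, then closure(A) ∩ closure(B) is nowhere dense in X. -/
open Set Filter Topology

theorem Disjoint.closure_inter_closure_subset_frontier {X : Type*} [TopologicalSpace X]
    {A B : Set X} (hAB : Disjoint A B) : closure A ∩ closure B ⊆ frontier A := by
  rw [frontier_eq_closure_inter_closure]
  exact inter_subset_inter_right _ (closure_mono hAB.subset_compl_left)

theorem IsResolvableSet.isNowhereDense_frontier {X : Type*} [TopologicalSpace X] {A : Set X}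
    (hA : IsResolvableSet A) : IsNowhereDense (frontier A) := by
  have h := (hA univ isClosed_univ).image_val
  rwa [Subtype.image_preimage_coe, univ_inter, univ_inter, ← compl_eq_univ_sdiff,
    ← frontier_eq_closure_inter_closure] at h

theorem closure_inter_closure_nowhereDense_general {X : Type*} [TopologicalSpace X] {A B : Set X}
    (hA : IsResolvableSet A) (hAB : Disjoint A B) :
    IsNowhereDense (closure A ∩ closure B) :=
  hA.isNowhereDense_frontier.mono hAB.closure_inter_closure_subset_frontier

/-- If `A` and `B` are disjoint resolvable subsets of a topological space, then
`closure A ∩ closure B` is nowhere dense. -/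
theorem closure_inter_closure_nowhereDense {X : Type*} [TopologicalSpace X] {A B : Set X}
    (hA : IsResolvableSet A) (hB : IsResolvableSet B) (hAB : Disjoint A B) :
    IsNowhereDense (closure A ∩ closure B) :=
  closure_inter_closure_nowhereDense_general hA hAB
end

section
/- Let f : X → Y be a base-resolvable function from a topological space X to a regular (T3) space Y. If D ⊆ X is dense in X and the restriction f|D has no point of continuity, then the set D \ AC(f) is also dense in X. -/
open Set Filter Topology

theorem IsResolvableSet.interior_closure_subset_closure_interior {X : Type*}
    [TopologicalSpace X] {A : Set X} (hA : IsResolvableSet A) :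
    interior (closure A) ⊆ closure (interior A) := by
  have hfr : interior (frontier A) = ∅ :=
    isClosed_frontier.isNowhereDense_iff.mp hA.isNowhereDense_frontier
  calc interior (closure A) ⊆ interior (closure (interior A) ∪ frontier A) := by
        rw [closure_eq_interior_union_frontier]
        exact interior_mono (union_subset_union_left _ subset_closure)
    _ = interior (closure (interior A)) := interior_union_isClosed_of_interior_empty
        isClosed_closure hfr
    _ ⊆ closure (interior A) := interior_subset

theorem IsOpen.inter_nonempty_of_subset_closure_interior {X : Type*} [TopologicalSpace X]
    {W P Q : Set X} (hW : IsOpen W) (hne : W.Nonempty) (hP : W ⊆ closure (interior P))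
    (hQ : W ⊆ closure (interior Q)) : (P ∩ Q).Nonempty := by
  obtain ⟨x, hx⟩ := hne
  obtain ⟨z, hzW, hzP⟩ := mem_closure_iff.mp (hP hx) W hW hx
  obtain ⟨w, ⟨-, hwP⟩, hwQ⟩ := mem_closure_iff.mp (hQ hzW) (W ∩ interior P)
    (hW.inter isOpen_interior) ⟨hzW, hzP⟩
  exact ⟨w, interior_subset hwP, interior_subset hwQ⟩

theorem AlmostContinuousAt.weaklyContinuousAt_of_isTopologicalBasis {X Y : Type*}
    [TopologicalSpace X] [TopologicalSpace Y] {f : X → Y} {x : X} {B : Set (Set Y)}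
    (hB : TopologicalSpace.IsTopologicalBasis B) (hres : ∀ V ∈ B, IsResolvableSet (f ⁻¹' V))
    (hx : AlmostContinuousAt f x) : WeaklyContinuousAt f x := by
  intro Oy hOy
  obtain ⟨V, hVB, hfxV, hVOy⟩ := hB.mem_nhds_iff.mp hOy
  obtain ⟨N, hN, hxN, hNV⟩ := hx V (hB.mem_nhds hVB hfxV)
  refine ⟨N, hN, hxN, ?_⟩
  calc N ⊆ interior (closure (f ⁻¹' V)) := interior_maximal hNV hN
    _ ⊆ closure (interior (f ⁻¹' V)) := (hres V hVB).interior_closure_subset_closure_interior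
    _ ⊆ closure (interior (f ⁻¹' Oy)) := closure_mono (interior_mono (preimage_mono hVOy))

theorem continuousWithinAt_of_forall_weaklyContinuousAt {X Y : Type*} [TopologicalSpace X]
    [TopologicalSpace Y] [RegularSpace Y] {f : X → Y} {D U : Set X} {x : X} (hU : IsOpen U)
    (hxU : x ∈ U) (hwc : ∀ d ∈ U ∩ D, WeaklyContinuousAt f d) (hxD : x ∈ D) :
    ContinuousWithinAt f D x := by
  refine (closed_nhds_basis (f x)).tendsto_right_iff.mpr fun C ⟨hC, hCc⟩ => ?_
  obtain ⟨N, hN, hxN, hNC⟩ := hwc x ⟨hxU, hxD⟩ C hC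
  refine mem_nhdsWithin.mpr ⟨N ∩ U, hN.inter hU, ⟨hxN, hxU⟩, ?_⟩
  rintro d ⟨⟨hdN, hdU⟩, hdD⟩
  by_contra hdC
  obtain ⟨M, hM, hdM, hMC⟩ := hwc d ⟨hdU, hdD⟩ Cᶜ (hCc.isOpen_compl.mem_nhds hdC)
  obtain ⟨w, hwC, hwC'⟩ := (hM.inter (hN.inter hU)).inter_nonempty_of_subset_closure_interior
    ⟨d, hdM, hdN, hdU⟩ (fun z hz => hNC hz.2.1) (fun z hz => hMC hz.1)
  exact hwC' hwC

/-- If `f` is base-resolvable into a regular (T3) space, `D` is dense in `X` and `f|D` has no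
point of continuity, then `D \ AC(f)` is dense in `X`. -/
theorem dense_diff_almostContinuous {X Y : Type*} [TopologicalSpace X]
    [TopologicalSpace Y] [T3Space Y] (f : X → Y) (hf : BaseResolvableFunction f)
    (D : Set X) (hD : Dense D) (hnc : ∀ x ∈ D, ¬ ContinuousWithinAt f D x) :
    Dense (D \ {x : X | AlmostContinuousAt f x}) := by
  obtain ⟨B, ⟨hB, -⟩, hres⟩ := hf
  refine dense_iff_inter_open.mpr fun U hU hUne => ?_
  by_contra hempty
  have hwc : ∀ d ∈ U ∩ D, WeaklyContinuousAt f d := fun d ⟨hdU, hdD⟩ =>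
    AlmostContinuousAt.weaklyContinuousAt_of_isTopologicalBasis hB hres
      (not_not.mp fun hd => hempty ⟨d, hdU, hdD, hd⟩)
  obtain ⟨x, hxU, hxD⟩ := hD.inter_open_nonempty U hU hUne
  exact hnc x hxD (continuousWithinAt_of_forall_weaklyContinuousAt hU hxU hwc hxD)
end

section
/- Let f : X → Y be a base-resolvable function from a topological space X to a Hausdorff space Y. Then the family {interior(closure(f⁻¹(y))) : y ∈ Y} is pairwise disjoint; that is, for distinct points y, z ∈ Y the sets interior(closure(f⁻¹(y))) and interior(closure(f⁻¹(z))) are disjoint. -/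
open Set Filter Topology

/-!
Testing resolvability of `A` on the closed set `F = X` shows that `closure A ∩ closure Aᶜ` is
nowhere dense, so no nonempty open set is contained in the closures of both a subset of `A` and a
subset of `Aᶜ`. Given `y ≠ z`, pick a basic open `b ∋ y` missing `z`; the fibres over `y` and `z`
lie in `f ⁻¹' b` and in its complement.
-/

namespace IsResolvableSet

variable {X : Type*} [TopologicalSpace X] {A : Set X}

theorem isNowhereDense_closure_inter_closure_compl (hA : IsResolvableSet A) :
    IsNowhereDense (closure A ∩ closure Aᶜ) := by
  have h := (hA univ isClosed_univ).image_val
  rwa [Subtype.image_preimage_coe, univ_inter, univ_inter, ← compl_eq_univ_sdiff] at h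

theorem disjoint_interior_closure (hA : IsResolvableSet A) {s t : Set X} (hs : s ⊆ A)
    (ht : t ⊆ Aᶜ) : Disjoint (interior (closure s)) (interior (closure t)) := by
  have hst : IsNowhereDense (closure s ∩ closure t) :=
    hA.isNowhereDense_closure_inter_closure_compl.mono
      (inter_subset_inter (closure_mono hs) (closure_mono ht))
  rw [disjoint_iff_inter_eq_empty, ← interior_inter, ← subset_empty_iff, ← hst]
  exact interior_mono subset_closure

end IsResolvableSet

/-- For a base-resolvable function into a Hausdorff space, the family of sets
`interior (closure (f ⁻¹' {y}))`, `y ∈ Y`, is pairwise disjoint. -/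
theorem interior_closure_fiber_disjoint {X Y : Type*} [TopologicalSpace X]
    [TopologicalSpace Y] [T2Space Y] (f : X → Y) (hf : BaseResolvableFunction f) :
    ∀ y z : Y, y ≠ z →
      Disjoint (interior (closure (f ⁻¹' {y}))) (interior (closure (f ⁻¹' {z}))) := by
  intro y z hyz
  obtain ⟨B, ⟨hB, -⟩, hres⟩ := hf
  obtain ⟨Vy, Vz, hVy, -, hyVy, hzVz, hV⟩ := t2_separation hyz
  obtain ⟨b, hbB, hyb, hbV⟩ := hB.exists_subset_of_mem_open hyVy hVy
  have hzb : z ∈ bᶜ := fun hzb ↦ hV.notMem_of_mem_left (hbV hzb) hzVz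
  exact (hres b hbB).disjoint_interior_closure
    (preimage_mono (singleton_subset_iff.2 hyb)) (preimage_mono (singleton_subset_iff.2 hzb))
end

section
/- If a topological space X has a countable dense subset D such that X is Preiss-Simon at every point of D, then X has a countable π-base. -/
open Set Filter Topology

/-!
Applying the Preiss-Simon property at `d ∈ D` to `A = X` yields a sequence of nonempty open sets
converging to `d`, i.e. a countable local π-base at `d`. Since `D` is dense, every nonempty open
set contains a point of `D` and hence one of these sets, so their union over the countable set `D`
is a countable π-base of `X`.
-/

section

variable {X : Type*} [TopologicalSpace X]

def IsPiBaseAt (P : Set (Set X)) (x : X) : Prop :=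
  (∀ U ∈ P, IsOpen U ∧ U.Nonempty) ∧ ∀ V ∈ 𝓝 x, ∃ U ∈ P, U ⊆ V

theorem PreissSimonAt.exists_countable_isPiBaseAt {x : X} (h : PreissSimonAt x) :
    ∃ P : Set (Set X), P.Countable ∧ IsPiBaseAt P x := by
  obtain ⟨U, -, hne, hopen, hconv⟩ := h univ (by simp)
  refine ⟨range U, countable_range U, ?_, fun V hV => ?_⟩
  · rintro _ ⟨n, rfl⟩
    -- the homeomorphism `Homeomorph.Set.univ X` is `Subtype.val`
    exact ⟨(Homeomorph.Set.univ X).isOpen_preimage.1 (hopen n), hne n⟩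
  · obtain ⟨n, hn⟩ := (hconv V hV).exists
    exact ⟨U n, mem_range_self n, hn⟩

theorem hasCountablePiBase_of_isPiBaseAt {D : Set X} (hDc : D.Countable) (hD : Dense D)
    {P : X → Set (Set X)} (hPc : ∀ x ∈ D, (P x).Countable) (hP : ∀ x ∈ D, IsPiBaseAt (P x) x) :
    HasCountablePiBase X := by
  refine ⟨⋃ x ∈ D, P x, hDc.biUnion hPc, ?_, fun V hV hVne => ?_⟩
  · simp only [mem_iUnion]
    rintro U ⟨x, hx, hU⟩
    exact (hP x hx).1 U hU
  · obtain ⟨x, hxD, hxV⟩ := hD.exists_mem_open hV hVne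
    obtain ⟨U, hU, hUV⟩ := (hP x hxD).2 V (hV.mem_nhds hxV)
    exact ⟨U, mem_biUnion hxD hU, hUV⟩

end

/-- If `X` has a countable dense subset `D` such that `X` is Preiss-Simon at every point of
`D`, then `X` has a countable π-base. -/
theorem countable_piBase_of_preissSimon_dense {X : Type*} [TopologicalSpace X]
    (D : Set X) (hDc : D.Countable) (hD : Dense D) (hPS : ∀ x ∈ D, PreissSimonAt x) :
    HasCountablePiBase X := by
  choose! P hPc hP using fun x hx => (hPS x hx).exists_countable_isPiBaseAt
  exact hasCountablePiBase_of_isPiBaseAt hDc hD hPc hP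
end
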